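/- arXiv:2309.10666 — 2 statements merged into one kernel-verified Lean document; each statement's English description precedes it below -/
import Mathlib

section
/- Let N be a positive integer, ε > 0 with ε < W/(2N²) where W = b − a, and 0 < w < W/N. Let X be the continuous random variable whose law has density p(x) = 1/(Nw) on the union ⋃_{k=1}^{N} (x_k − w, x_k] with x_k = a + kW/N, and p(x) = 0 elsewhere. Then every half-open interval I = (a', b'] ⊆ (a, b] with P(X ∈ I) ≥ 2/N satisfies Δ_X(I) > ε. -/
open MeasureTheory

/-- `μ_{(u,v]} = E[X | X ∈ (u, v]]`. -/
noncomputable def intervalMean {Ω : Type*} [MeasurableSpace Ω]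
    (P : Measure Ω) (X : Ω → ℝ) (u v : ℝ) : ℝ :=
  (∫ ω in {ω | X ω ∈ Set.Ioc u v}, X ω ∂P) / (P {ω | X ω ∈ Set.Ioc u v}).toReal

/-- Per-interval approximation error
`Δ_X((u,v]) = E[1_{u < X ≤ μ_{(u,v]}} (μ_{(u,v]} − X)]`. -/
noncomputable def Delta {Ω : Type*} [MeasurableSpace Ω]
    (P : Measure Ω) (X : Ω → ℝ) (u v : ℝ) : ℝ :=
  ∫ ω in {ω | X ω ∈ Set.Ioc u (intervalMean P X u v)},
    (intervalMean P X u v - X ω) ∂P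

/-- The density `p(x) = 1/(Nw)` on `⋃_{k=1}^{N} (x_k − w, x_k]` with
`x_k = a + k (b−a)/N`, and `p(x) = 0` elsewhere. -/
noncomputable def combDensity (a b : ℝ) (N : ℕ) (w : ℝ) : ℝ → ℝ :=
  Set.indicator
    (⋃ k ∈ Finset.Icc 1 N,
      Set.Ioc (a + (k : ℝ) * (b - a) / N - w) (a + (k : ℝ) * (b - a) / N))
    (fun _ => 1 / ((N : ℝ) * w))

/-!
Pass to the law `ν` of `X`. Since `c = μ_I` is the `ν`-mean on `I = (a', b']`, the integral of
`x - c` over `I` vanishes, so `2 Δ_X(I) = ∫_I |x - c| dν`. By the layer-cake formula this is at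
least `∫_0^L (ν(I) - ν[c - t, c + t]) dt` with `L = W / N`. The density is dominated by a comb `G`
of period `L` and mass `1/N` per period, and `q(t) = ∫_{c-t}^{c+t} G` satisfies
`q(t) + q(L - t) = 2/N`, whence `∫_0^L q = L/N`. As `ν(I) ≥ 2/N`, we get
`2 Δ_X(I) ≥ 2L/N - L/N = W/N²`.
-/

open Set Function

section IntervalMean

variable {Ω : Type*} [MeasurableSpace Ω]

lemma intervalMean_map {P : Measure Ω} {X : Ω → ℝ} (hX : AEMeasurable X P) (u v : ℝ) :
    intervalMean P X u v = intervalMean (P.map X) id u v := by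
  show _ = (∫ x in Ioc u v, x ∂P.map X) / (P.map X (Ioc u v)).toReal
  rw [Measure.map_apply_of_aemeasurable hX measurableSet_Ioc,
    setIntegral_map measurableSet_Ioc (f := fun x => x) aestronglyMeasurable_id hX]
  rfl

lemma Delta_map {P : Measure Ω} {X : Ω → ℝ} (hX : AEMeasurable X P) (u v : ℝ) :
    Delta P X u v = Delta (P.map X) id u v := by
  set c := intervalMean (P.map X) id u v
  show _ = ∫ x in Ioc u c, (c - x) ∂P.map X
  rw [setIntegral_map measurableSet_Ioc (by fun_prop) hX, Delta, intervalMean_map hX]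
  rfl

lemma intervalMean_eq_setAverage (ν : Measure ℝ) (u v : ℝ) :
    intervalMean ν id u v = ⨍ x in Ioc u v, x ∂ν := by
  rw [setAverage_eq, smul_eq_mul, measureReal_def, intervalMean, div_eq_inv_mul]
  rfl

variable {ν : Measure ℝ} [IsFiniteMeasure ν] {u v : ℝ}

lemma intervalMean_mem_Icc (h : ν (Ioc u v) ≠ 0) : intervalMean ν id u v ∈ Icc u v := by
  rw [intervalMean_eq_setAverage]
  exact (convex_Icc u v).set_average_mem isClosed_Icc h (measure_ne_top _ _)
    ((ae_restrict_iff' measurableSet_Ioc).2 (ae_of_all _ fun _ => mem_Icc_of_Ioc))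
    continuous_id.integrableOn_Ioc

lemma two_mul_Delta_eq_setIntegral_abs (h : ν (Ioc u v) ≠ 0) :
    2 * Delta ν id u v = ∫ x in Ioc u v, |x - intervalMean ν id u v| ∂ν := by
  set c := intervalMean ν id u v with hc
  obtain ⟨huc, hcv⟩ := intervalMean_mem_Icc h
  have hDelta : Delta ν id u v = ∫ x in Ioc u c, (c - x) ∂ν := rfl
  have hmean : ∫ x in Ioc u v, (x - c) ∂ν = 0 := by
    rw [hc, intervalMean_eq_setAverage]
    exact setAverage_sub_setAverage (measure_ne_top _ _) _
  have hleft : ∫ x in Ioc u c, |x - c| ∂ν = ∫ x in Ioc u c, (c - x) ∂ν :=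
    setIntegral_congr_fun measurableSet_Ioc fun x hx => by
      rw [abs_of_nonpos (sub_nonpos.2 hx.2), neg_sub]
  have hright : ∫ x in Ioc c v, |x - c| ∂ν = ∫ x in Ioc c v, (x - c) ∂ν :=
    setIntegral_congr_fun measurableSet_Ioc fun x hx => abs_of_nonneg (sub_nonneg.2 hx.1.le)
  have hneg : ∫ x in Ioc u c, (x - c) ∂ν = -∫ x in Ioc u c, (c - x) ∂ν := by
    rw [← integral_neg]
    simp only [neg_sub]
  have hsplit {f : ℝ → ℝ} (hf : Continuous f) :
      ∫ x in Ioc u v, f x ∂ν = (∫ x in Ioc u c, f x ∂ν) + ∫ x in Ioc c v, f x ∂ν := by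
    rw [← Ioc_union_Ioc_eq_Ioc huc hcv, setIntegral_union (Ioc_disjoint_Ioc_of_le le_rfl)
      measurableSet_Ioc hf.integrableOn_Ioc hf.integrableOn_Ioc]
  rw [hsplit (by fun_prop)] at hmean ⊢
  rw [hDelta, hleft, hright]
  linarith

end IntervalMean

section PeriodicMajorant

variable {G : ℝ → ℝ} {L : ℝ}

lemma continuous_intervalIntegral_centered (hGi : ∀ u v, IntervalIntegrable G volume u v)
    (c : ℝ) : Continuous fun t => ∫ x in (c - t)..(c + t), G x := by
  have hF := intervalIntegral.continuous_primitive hGi 0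
  have hq : (fun t => ∫ x in (c - t)..(c + t), G x) =
      fun t => (∫ x in 0..(c + t), G x) - ∫ x in 0..(c - t), G x :=
    funext fun t => (intervalIntegral.integral_interval_sub_left (hGi _ _) (hGi _ _)).symm
  rw [hq]
  exact (hF.comp (by fun_prop)).sub (hF.comp (by fun_prop))

lemma Function.Periodic.intervalIntegral_centered_add (hG : Periodic G L)
    (hGi : ∀ u v, IntervalIntegrable G volume u v) (c t : ℝ) :
    (∫ x in (c - t)..(c + t), G x) + ∫ x in (c - (L - t))..(c + (L - t)), G x =
      2 * ∫ x in 0..L, G x := by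
  have hperiod (s : ℝ) : ∫ x in s..(s + L), G x = ∫ x in 0..L, G x := by
    simpa using hG.intervalIntegral_add_eq s 0
  have h₁ := hperiod (c - t)
  have h₂ := hperiod (c - (L - t))
  rw [show c - t + L = c + (L - t) by ring,
    ← intervalIntegral.integral_add_adjacent_intervals (hGi _ (c + t)) (hGi _ _)] at h₁
  rw [show c - (L - t) + L = c + t by ring] at h₂
  rw [← intervalIntegral.integral_add_adjacent_intervals (hGi (c - (L - t)) (c + t))
    (hGi (c + t) (c + (L - t)))]
  linarith

lemma Function.Periodic.integral_intervalIntegral_centered (hG : Periodic G L)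
    (hGi : ∀ u v, IntervalIntegrable G volume u v) (c : ℝ) :
    ∫ t in 0..L, (∫ x in (c - t)..(c + t), G x) = L * ∫ x in 0..L, G x := by
  have hq := continuous_intervalIntegral_centered hGi c
  have hq' : IntervalIntegrable (fun t => ∫ x in (c - (L - t))..(c + (L - t)), G x) volume 0 L :=
    (hq.comp (by fun_prop : Continuous fun t : ℝ => L - t)).intervalIntegrable _ _
  have hreflect : ∫ t in 0..L, (∫ x in (c - (L - t))..(c + (L - t)), G x) =
      ∫ t in 0..L, (∫ x in (c - t)..(c + t), G x) := by
    simpa using intervalIntegral.integral_comp_sub_left (a := 0) (b := L)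
      (fun t => ∫ x in (c - t)..(c + t), G x) L
  have hsum := intervalIntegral.integral_congr (μ := volume) (a := 0) (b := L)
    fun t _ => hG.intervalIntegral_centered_add hGi c t
  rw [intervalIntegral.integral_add (hq.intervalIntegrable _ _) hq', hreflect,
    intervalIntegral.integral_const, sub_zero, smul_eq_mul] at hsum
  linarith

lemma measure_Icc_le_ofReal_intervalIntegral (hG0 : 0 ≤ G) {ν : Measure ℝ}
    (hν : ν ≤ volume.withDensity fun x => ENNReal.ofReal (G x)) {u v : ℝ} (huv : u ≤ v)
    (hGi : IntervalIntegrable G volume u v) :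
    ν (Icc u v) ≤ ENNReal.ofReal (∫ x in u..v, G x) := by
  rw [intervalIntegral.integral_of_le huv, ← integral_Icc_eq_integral_Ioc,
    ofReal_integral_eq_lintegral_ofReal ((intervalIntegrable_iff_integrableOn_Icc_of_le huv).1 hGi)
      (ae_of_all _ hG0), ← withDensity_apply _ measurableSet_Icc]
  exact hν _

lemma lintegral_measure_sub_measure_Icc_le (ν : Measure ℝ) (s : Set ℝ) (c : ℝ) :
    ∫⁻ t in Ioi 0, (ν s - ν (Icc (c - t) (c + t))) ≤ ∫⁻ x in s, ENNReal.ofReal |x - c| ∂ν := by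
  rw [lintegral_eq_lintegral_meas_lt _ (ae_of_all _ fun _ => abs_nonneg _) (by fun_prop)]
  refine lintegral_mono fun t => ?_
  calc ν s - ν (Icc (c - t) (c + t)) ≤ ν (s \ Icc (c - t) (c + t)) := le_measure_sdiff
    _ ≤ ν ({x | t < |x - c|} ∩ s) := measure_mono fun x ⟨hxs, hx⟩ => by
        refine ⟨show t < |x - c| from lt_of_not_ge fun h => hx ?_, hxs⟩
        obtain ⟨h₁, h₂⟩ := abs_le.1 h
        exact ⟨by linarith, by linarith⟩
    _ ≤ ν.restrict s {x | t < |x - c|} := Measure.le_restrict_apply _ _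

theorem mul_intervalIntegral_le_setIntegral_abs_sub (hL : 0 ≤ L) (hG : Periodic G L)
    (hG0 : 0 ≤ G) (hGi : ∀ u v, IntervalIntegrable G volume u v) {ν : Measure ℝ}
    (hν : ν ≤ volume.withDensity fun x => ENNReal.ofReal (G x)) {s : Set ℝ}
    (hs : ENNReal.ofReal (2 * ∫ x in 0..L, G x) ≤ ν s) {c : ℝ}
    (hint : IntegrableOn (fun x => |x - c|) s ν) :
    L * ∫ x in 0..L, G x ≤ ∫ x in s, |x - c| ∂ν := by
  set m := ∫ x in 0..L, G x with hm
  have hq := continuous_intervalIntegral_centered hGi c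
  have hq0 {t : ℝ} (ht : 0 ≤ t) : 0 ≤ ∫ x in (c - t)..(c + t), G x :=
    intervalIntegral.integral_nonneg (by linarith) fun x _ => hG0 x
  have hq_le {t : ℝ} (ht : t ∈ Ioc 0 L) : ∫ x in (c - t)..(c + t), G x ≤ 2 * m := by
    rw [← hG.intervalIntegral_centered_add hGi c t]
    exact le_add_of_nonneg_right (hq0 (sub_nonneg.2 ht.2))
  have hint' : IntegrableOn (fun t => 2 * m - ∫ x in (c - t)..(c + t), G x) (Ioc 0 L) :=
    (continuous_const.sub hq).integrableOn_Ioc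
  have key : ENNReal.ofReal (L * m) ≤ ∫⁻ x in s, ENNReal.ofReal |x - c| ∂ν :=
    calc ENNReal.ofReal (L * m)
        = ENNReal.ofReal (∫ t in 0..L, (2 * m - ∫ x in (c - t)..(c + t), G x)) := by
          rw [intervalIntegral.integral_sub intervalIntegrable_const (hq.intervalIntegrable _ _),
            hG.integral_intervalIntegral_centered hGi, intervalIntegral.integral_const,
            smul_eq_mul, ← hm]
          congr 1
          ring
      _ = ∫⁻ t in Ioc 0 L, ENNReal.ofReal (2 * m - ∫ x in (c - t)..(c + t), G x) := by
          rw [intervalIntegral.integral_of_le hL, ofReal_integral_eq_lintegral_ofReal hint'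
            ((ae_restrict_iff' measurableSet_Ioc).2 (ae_of_all _ fun t ht => sub_nonneg.2 (hq_le ht)))]
      _ ≤ ∫⁻ t in Ioc 0 L, (ν s - ν (Icc (c - t) (c + t))) :=
          setLIntegral_mono' measurableSet_Ioc fun t ht => by
            rw [ENNReal.ofReal_sub _ (hq0 ht.1.le)]
            exact tsub_le_tsub hs
              (measure_Icc_le_ofReal_intervalIntegral hG0 hν (by linarith [ht.1]) (hGi _ _))
      _ ≤ ∫⁻ t in Ioi 0, (ν s - ν (Icc (c - t) (c + t))) := lintegral_mono_set Ioc_subset_Ioi_self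
      _ ≤ ∫⁻ x in s, ENNReal.ofReal |x - c| ∂ν := lintegral_measure_sub_measure_Icc_le ν s c
  rw [← ofReal_integral_eq_lintegral_ofReal hint (ae_of_all _ fun _ => abs_nonneg _)] at key
  exact (ENNReal.ofReal_le_ofReal_iff (integral_nonneg fun _ => abs_nonneg _)).1 key

end PeriodicMajorant

section CombMajorant

variable {L : ℝ} (hL : 0 < L) (a w v : ℝ)

/-- The comb with teeth `(a + k L - w, a + k L]`, `k : ℤ`, of height `v`. -/
noncomputable def combMajorant : ℝ → ℝ :=
  {x | toIocMod hL (a - w) x ≤ a}.indicator fun _ => v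

lemma combMajorant_periodic : Periodic (combMajorant hL a w v) L := fun x => by
  simp only [combMajorant, indicator, mem_ofPred_eq, toIocMod_add_right]

lemma combMajorant_nonneg (hv : 0 ≤ v) : 0 ≤ combMajorant hL a w v :=
  fun _ => indicator_nonneg (fun _ _ => hv) _

lemma combMajorant_eqOn :
    EqOn (combMajorant hL a w v) ((Ioc (a - w) a).indicator fun _ => v) (Ioc (a - w) (a - w + L)) :=
  fun x hx => by
    simp only [combMajorant, indicator, mem_ofPred_eq, (toIocMod_eq_self hL).2 hx, mem_Ioc, hx.1,
      true_and]

lemma combMajorant_intervalIntegrable (u u' : ℝ) :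
    IntervalIntegrable (combMajorant hL a w v) volume u u' := by
  refine (combMajorant_periodic hL a w v).intervalIntegrable hL.ne' (t := a - w) ?_ u u'
  rw [intervalIntegrable_iff_integrableOn_Ioc_of_le (by linarith)]
  exact ((integrableOn_const measure_Ioc_lt_top.ne).indicator measurableSet_Ioc).congr_fun
    (combMajorant_eqOn hL a w v).symm measurableSet_Ioc

lemma intervalIntegral_combMajorant (hw : 0 ≤ w) (hwL : w ≤ L) :
    ∫ x in 0..L, combMajorant hL a w v x = v * w := by
  have hshift := (combMajorant_periodic hL a w v).intervalIntegral_add_eq 0 (a - w)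
  rw [zero_add] at hshift
  rw [hshift, intervalIntegral.integral_of_le (by linarith),
    setIntegral_congr_fun measurableSet_Ioc (combMajorant_eqOn hL a w v),
    setIntegral_indicator measurableSet_Ioc,
    inter_eq_right.2 (Ioc_subset_Ioc_right (by linarith)), setIntegral_const,
    Real.volume_real_Ioc_of_le (by linarith), smul_eq_mul]
  ring

end CombMajorant

lemma combDensity_le_combMajorant {a b : ℝ} {N : ℕ} {w : ℝ} (hL : 0 < (b - a) / N) (hw : 0 ≤ w)
    (hwL : w ≤ (b - a) / N) :
    combDensity a b N w ≤ combMajorant hL a w (1 / (N * w)) := by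
  refine fun x => indicator_le_indicator_of_subset ?_ (fun _ => by positivity) x
  simp only [subset_def, mem_iUnion, mem_ofPred_eq]
  rintro x ⟨k, -, hx₁, hx₂⟩
  rw [mul_div_assoc] at hx₁ hx₂
  have hk : toIocMod hL (a - w) x = x - k * ((b - a) / N) :=
    (toIocMod_eq_iff hL).2 ⟨⟨by linarith, by linarith⟩, k, by simp⟩
  linarith

theorem lower_bound_continuous_interval_general {Ω : Type*} [MeasurableSpace Ω]
    (P : Measure Ω) [IsProbabilityMeasure P]
    (X : Ω → ℝ) (hXm : Measurable X)
    (a b : ℝ)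
    (N : ℕ) (hN : 0 < N)
    (ε : ℝ) (hεW : ε < (b - a) / (2 * (N : ℝ) ^ 2))
    (w : ℝ) (hw : 0 < w) (hwN : w < (b - a) / N)
    (hlaw : P.map X =
      volume.withDensity (fun x => ENNReal.ofReal (combDensity a b N w x))) :
    ∀ a' b' : ℝ, a ≤ a' → b' ≤ b →
      2 / (N : ℝ) ≤ (P {ω | X ω ∈ Set.Ioc a' b'}).toReal →
      ε < Delta P X a' b' := by
  intro a' b' _ _ hp
  have hL : 0 < (b - a) / N := hw.trans hwN
  have hNpos : (0 : ℝ) < N := Nat.cast_pos.2 hN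
  set ν := P.map X
  set G := combMajorant hL a w (1 / (N * w))
  have hm : ∫ x in 0..(b - a) / N, G x = 1 / N := by
    rw [intervalIntegral_combMajorant hL a w _ hw.le hwN.le]
    field_simp
  have hν : ν ≤ volume.withDensity fun x => ENNReal.ofReal (G x) :=
    hlaw ▸ withDensity_mono (ae_of_all _ fun x =>
      ENNReal.ofReal_le_ofReal (combDensity_le_combMajorant hL hw.le hwN.le x))
  have hνI : ENNReal.ofReal (2 * ∫ x in 0..(b - a) / N, G x) ≤ ν (Ioc a' b') := by
    rw [hm, Measure.map_apply hXm measurableSet_Ioc, mul_one_div]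
    exact ENNReal.ofReal_le_of_le_toReal hp
  have hνI₀ : ν (Ioc a' b') ≠ 0 :=
    ((ENNReal.ofReal_pos.2 (by rw [hm]; positivity)).trans_le hνI).ne'
  have hbound := mul_intervalIntegral_le_setIntegral_abs_sub hL.le
    (combMajorant_periodic hL a w _) (combMajorant_nonneg hL a w _ (by positivity))
    (combMajorant_intervalIntegrable hL a w _) hν hνI (c := intervalMean ν id a' b')
    (by fun_prop : Continuous fun x => |x - intervalMean ν id a' b'|).integrableOn_Ioc
  rw [hm, ← two_mul_Delta_eq_setIntegral_abs hνI₀, ← Delta_map hXm.aemeasurable] at hbound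
  calc ε < (b - a) / (2 * N ^ 2) := hεW
    _ = (b - a) / N * (1 / N) / 2 := by field_simp
    _ ≤ Delta P X a' b' := by linarith

/-- Let `N ≥ 1`, `0 < ε < W/(2N²)` with `W = b − a`, `0 < w < W/N`,
and let `X` be the continuous random variable whose law has density `combDensity a b N w`
with respect to Lebesgue measure. Then every half-open interval `I = (a', b'] ⊆ (a, b]`
with `P(X ∈ I) ≥ 2/N` satisfies `Δ_X(I) > ε`. -/
theorem lower_bound_continuous_interval {Ω : Type*} [MeasurableSpace Ω]
    (P : Measure Ω) [IsProbabilityMeasure P]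
    (X : Ω → ℝ) (hX : Integrable X P) (hXm : Measurable X)
    (a b : ℝ) (hab : a < b)
    (N : ℕ) (hN : 0 < N)
    (ε : ℝ) (hε : 0 < ε) (hεW : ε < (b - a) / (2 * (N : ℝ) ^ 2))
    (w : ℝ) (hw : 0 < w) (hwN : w < (b - a) / N)
    (hlaw : P.map X =
      volume.withDensity (fun x => ENNReal.ofReal (combDensity a b N w x))) :
    ∀ a' b' : ℝ, a ≤ a' → b' ≤ b →
      2 / (N : ℝ) ≤ (P {ω | X ω ∈ Set.Ioc a' b'}).toReal →
      ε < Delta P X a' b' :=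
  lower_bound_continuous_interval_general P X hXm a b N hN ε hεW w hw hwN hlaw
end

section
/- Let N be a positive integer, ε > 0 with ε < W/(2N²) where W = b − a, and 0 < w < W/N, and let X be the continuous random variable whose law has density p(x) = 1/(Nw) on ⋃_{k=1}^{N} (x_k − w, x_k] with x_k = a + kW/N and p(x) = 0 elsewhere. Then every partition (I_1, …, I_m) of (a, b] into consecutive half-open intervals such that Δ_X(I_j) ≤ ε for every j with P(X ∈ I_j) > 0 must satisfy m > N/2. -/
/-!
On a cell `I`, the quantity `Δ(I)` is half the mean absolute deviation of `X` from its
conditional mean `μ`, because `E[1_I (μ - X)] = 0`. Each tooth of the comb carries mass `1/N`,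
and the means of distinct teeth are at least `W/N` apart, so a cell containing two whole teeth
has `Δ ≥ (1/N) (W/N) / 2 = W/(2N²) > ε`. Hence every cell contains at most one whole tooth,
and every other tooth is cut by one of the `m - 1` inner breakpoints, each of which cuts at most
one tooth: `N ≤ m + (m - 1)`.
-/

open MeasureTheory

open Set

section IntervalError

variable {Ω : Type*} [MeasurableSpace Ω] {P : Measure Ω} [IsFiniteMeasure P] {X : Ω → ℝ}
  {u v : ℝ}

lemma intervalMean_le (hX : Integrable X P) (hXm : Measurable X)
    (hI : P {ω | X ω ∈ Ioc u v} ≠ 0) : intervalMean P X u v ≤ v := by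
  have hpos : 0 < P.real {ω | X ω ∈ Ioc u v} :=
    lt_of_le_of_ne measureReal_nonneg ((measureReal_ne_zero_iff).2 hI).symm
  rw [intervalMean, ← measureReal_def, div_le_iff₀ hpos]
  calc ∫ ω in {ω | X ω ∈ Ioc u v}, X ω ∂P ≤ ∫ _ in {ω | X ω ∈ Ioc u v}, v ∂P :=
        setIntegral_mono_on hX.integrableOn (integrableOn_const (measure_ne_top _ _))
          (hXm measurableSet_Ioc) fun ω hω => hω.2
    _ = v * P.real {ω | X ω ∈ Ioc u v} := by rw [setIntegral_const, smul_eq_mul, mul_comm]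

lemma setIntegral_intervalMean_sub (hX : Integrable X P) (hI : P {ω | X ω ∈ Ioc u v} ≠ 0) :
    ∫ ω in {ω | X ω ∈ Ioc u v}, (intervalMean P X u v - X ω) ∂P = 0 := by
  have hI' : P.real {ω | X ω ∈ Ioc u v} ≠ 0 := (measureReal_ne_zero_iff).2 hI
  rw [integral_sub (integrable_const _).integrableOn hX.integrableOn, setIntegral_const,
    smul_eq_mul, intervalMean, ← measureReal_def, mul_div_cancel₀ _ hI', sub_self]

lemma Delta_eq_setIntegral_max (hX : Integrable X P) (hXm : Measurable X)
    (hI : P {ω | X ω ∈ Ioc u v} ≠ 0) :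
    Delta P X u v = ∫ ω in {ω | X ω ∈ Ioc u v}, max (intervalMean P X u v - X ω) 0 ∂P := by
  set μ := intervalMean P X u v
  have hμv : μ ≤ v := intervalMean_le hX hXm hI
  have hIm : MeasurableSet {ω | X ω ∈ Ioc u v} := hXm measurableSet_Ioc
  rw [setIntegral_eq_of_subset_of_forall_sdiff_eq_zero hIm
    (fun ω hω => ⟨hω.1, hω.2.trans hμv⟩ : {ω | X ω ∈ Ioc u μ} ⊆ {ω | X ω ∈ Ioc u v})
    fun ω hω => max_eq_right (sub_nonpos.2 (not_le.1 fun h => hω.2 ⟨hω.1.1, h⟩).le)]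
  exact setIntegral_congr_fun (hXm measurableSet_Ioc) fun ω hω =>
    (max_eq_left (sub_nonneg.2 hω.2)).symm

lemma Delta_eq_half_setIntegral_abs (hX : Integrable X P) (hXm : Measurable X)
    (hI : P {ω | X ω ∈ Ioc u v} ≠ 0) :
    Delta P X u v = (∫ ω in {ω | X ω ∈ Ioc u v}, |intervalMean P X u v - X ω| ∂P) / 2 := by
  have hint : Integrable (fun ω => intervalMean P X u v - X ω) P := (integrable_const _).sub hX
  have habs : ∀ t : ℝ, |t| = 2 * max t 0 - t := fun t => by
    rcases le_total t 0 with h | h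
    · rw [abs_of_nonpos h, max_eq_right h]; ring
    · rw [abs_of_nonneg h, max_eq_left h]; ring
  simp_rw [habs]
  rw [integral_sub (hint.pos_part.const_mul 2).integrableOn hint.integrableOn,
    setIntegral_intervalMean_sub hX hI, integral_const_mul, Delta_eq_setIntegral_max hX hXm hI]
  ring

lemma mul_abs_sub_le_setIntegral_abs (hX : Integrable X P) {A : Set Ω} {ρ c : ℝ}
    (hρ : P.real A = ρ) (hc : ∫ ω in A, X ω ∂P = ρ * c) (t : ℝ) :
    ρ * |t - c| ≤ ∫ ω in A, |t - X ω| ∂P := by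
  have hρ₀ : 0 ≤ ρ := hρ ▸ measureReal_nonneg
  calc ρ * |t - c| = |∫ ω in A, (t - X ω) ∂P| := by
        rw [integral_sub (integrable_const _).integrableOn hX.integrableOn,
          setIntegral_const, hρ, hc, smul_eq_mul, ← mul_sub, abs_mul, abs_of_nonneg hρ₀]
    _ ≤ ∫ ω in A, |t - X ω| ∂P := abs_integral_le_integral_abs

lemma half_mul_abs_sub_le_Delta (hX : Integrable X P) (hXm : Measurable X) {A₁ A₂ : Set Ω}
    (hA₂ : MeasurableSet A₂) (hdisj : Disjoint A₁ A₂) (h₁ : A₁ ⊆ {ω | X ω ∈ Ioc u v})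
    (h₂ : A₂ ⊆ {ω | X ω ∈ Ioc u v}) {ρ c₁ c₂ : ℝ} (hρ : 0 < ρ)
    (hm₁ : P.real A₁ = ρ) (hm₂ : P.real A₂ = ρ)
    (hi₁ : ∫ ω in A₁, X ω ∂P = ρ * c₁) (hi₂ : ∫ ω in A₂, X ω ∂P = ρ * c₂) :
    ρ * |c₁ - c₂| / 2 ≤ Delta P X u v := by
  set μ := intervalMean P X u v
  have hI : P {ω | X ω ∈ Ioc u v} ≠ 0 := fun h =>
    hρ.ne' (hm₁ ▸ (measureReal_eq_zero_iff).2 (measure_mono_null h₁ h))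
  have hint : IntegrableOn (fun ω => |μ - X ω|) {ω | X ω ∈ Ioc u v} P :=
    ((integrable_const μ).sub hX).abs.integrableOn
  have hsplit : ρ * |c₁ - c₂| ≤ ∫ ω in {ω | X ω ∈ Ioc u v}, |μ - X ω| ∂P :=
    calc ρ * |c₁ - c₂| ≤ ρ * |μ - c₁| + ρ * |μ - c₂| := by
          rw [← mul_add, abs_sub_comm μ c₁]
          exact mul_le_mul_of_nonneg_left (abs_sub_le c₁ μ c₂) hρ.le
      _ ≤ ∫ ω in A₁, |μ - X ω| ∂P + ∫ ω in A₂, |μ - X ω| ∂P :=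
          add_le_add (mul_abs_sub_le_setIntegral_abs hX hm₁ hi₁ μ)
            (mul_abs_sub_le_setIntegral_abs hX hm₂ hi₂ μ)
      _ = ∫ ω in A₁ ∪ A₂, |μ - X ω| ∂P :=
          (setIntegral_union hdisj hA₂ (hint.mono_set h₁) (hint.mono_set h₂)).symm
      _ ≤ ∫ ω in {ω | X ω ∈ Ioc u v}, |μ - X ω| ∂P :=
          setIntegral_mono_set hint (Filter.Eventually.of_forall fun _ => abs_nonneg _)
            (union_subset h₁ h₂).eventuallyLE
  rw [Delta_eq_half_setIntegral_abs hX hXm hI]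
  linarith

end IntervalError

section DensityLaw

variable {Ω : Type*} [MeasurableSpace Ω] {P : Measure Ω} {X : Ω → ℝ} {f : ℝ → ℝ}

lemma map_restrict_preimage_eq_smul (hXm : Measurable X)
    (hlaw : P.map X = volume.withDensity (fun x => ENNReal.ofReal (f x)))
    {s : Set ℝ} (hs : MeasurableSet s) {c : ℝ} (hf : EqOn f (fun _ => c) s) :
    (P.restrict (X ⁻¹' s)).map X = ENNReal.ofReal c • volume.restrict s := by
  rw [← Measure.restrict_map hXm hs, hlaw, restrict_withDensity hs, ← withDensity_const]
  exact withDensity_congr_ae (Filter.eventuallyEq_of_mem (ae_restrict_mem hs)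
    fun x hx => by rw [hf hx])

lemma measureReal_preimage_Ioc_eq (hXm : Measurable X)
    (hlaw : P.map X = volume.withDensity (fun x => ENNReal.ofReal (f x)))
    {s t c : ℝ} (hst : s ≤ t) (hc : 0 ≤ c) (hf : EqOn f (fun _ => c) (Ioc s t)) :
    P.real (X ⁻¹' Ioc s t) = c * (t - s) := by
  have h := congrArg (fun μ : Measure ℝ => μ.real univ)
    (map_restrict_preimage_eq_smul hXm hlaw measurableSet_Ioc hf)
  simpa [Measure.real, Measure.map_apply hXm MeasurableSet.univ, ENNReal.toReal_mul, hc,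
    hst] using h

lemma setIntegral_preimage_Ioc_eq (hXm : Measurable X)
    (hlaw : P.map X = volume.withDensity (fun x => ENNReal.ofReal (f x)))
    {s t c : ℝ} (hst : s ≤ t) (hc : 0 ≤ c) (hf : EqOn f (fun _ => c) (Ioc s t)) :
    ∫ ω in X ⁻¹' Ioc s t, X ω ∂P = c * ((t ^ 2 - s ^ 2) / 2) := by
  rw [← integral_map (f := fun y : ℝ => y) hXm.aemeasurable aestronglyMeasurable_id,
    map_restrict_preimage_eq_smul hXm hlaw measurableSet_Ioc hf, integral_smul_measure,
    ← intervalIntegral.integral_of_le hst, integral_id, ENNReal.toReal_ofReal hc, smul_eq_mul]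

end DensityLaw

section Comb

variable {a b w : ℝ} {N k l : ℕ}

/-- The paper's `x_k`. -/
noncomputable def combPoint (a b : ℝ) (N k : ℕ) : ℝ := a + k * (b - a) / N

noncomputable def combTooth (a b : ℝ) (N : ℕ) (w : ℝ) (k : ℕ) : Set ℝ :=
  Ioc (combPoint a b N k - w) (combPoint a b N k)

lemma combPoint_sub_combPoint (a b : ℝ) (N k l : ℕ) :
    combPoint a b N k - combPoint a b N l = ((k : ℝ) - l) * ((b - a) / N) := by
  unfold combPoint; ring

lemma abs_le_abs_combPoint_sub (hkl : k ≠ l) :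
    |(b - a) / N| ≤ |combPoint a b N k - combPoint a b N l| := by
  have h : (1 : ℤ) ≤ |(k : ℤ) - l| := Int.one_le_abs (sub_ne_zero.2 (by exact_mod_cast hkl))
  have h' : (1 : ℝ) ≤ |(k : ℝ) - l| := by exact_mod_cast h
  rw [combPoint_sub_combPoint, abs_mul]
  exact le_mul_of_one_le_left (abs_nonneg _) h'

lemma disjoint_combTooth (hwN : w < (b - a) / N) (hkl : k ≠ l) :
    Disjoint (combTooth a b N w k) (combTooth a b N w l) := by
  have h := hwN.trans_le ((le_abs_self _).trans (abs_le_abs_combPoint_sub hkl))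
  rw [combTooth, combTooth, Ioc_disjoint_Ioc]
  rcases le_total (combPoint a b N k) (combPoint a b N l) with h' | h'
  · rw [abs_of_nonpos (sub_nonpos.2 h')] at h
    rw [min_eq_left h', max_eq_right (by linarith)]
    linarith
  · rw [abs_of_nonneg (sub_nonneg.2 h')] at h
    rw [min_eq_right h', max_eq_left (by linarith)]
    linarith

lemma combTooth_subset_Ioc (hN : N ≠ 0) (hw : 0 ≤ w) (hwN : w ≤ (b - a) / N)
    (hk : k ∈ Finset.Icc 1 N) : combTooth a b N w k ⊆ Ioc a b := by
  obtain ⟨hk1, hkN⟩ := Finset.mem_Icc.1 hk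
  have hδ : 0 ≤ (b - a) / N := hw.trans hwN
  have h0 := combPoint_sub_combPoint a b N k 0
  have hN' := combPoint_sub_combPoint a b N N k
  have hk1' : (1 : ℝ) ≤ k := by exact_mod_cast hk1
  have hkN' : (k : ℝ) ≤ N := by exact_mod_cast hkN
  have hx0 : combPoint a b N 0 = a := by simp [combPoint]
  have hxN : combPoint a b N N = b := by simp [combPoint, hN]
  refine Ioc_subset_Ioc ?_ ?_ <;> nlinarith

lemma combDensity_eqOn_combTooth (hk : k ∈ Finset.Icc 1 N) :
    EqOn (combDensity a b N w) (fun _ => 1 / (N * w)) (combTooth a b N w k) :=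
  fun _ hx => indicator_of_mem (mem_iUnion₂.2 ⟨k, hk, hx⟩) _

variable {Ω : Type*} [MeasurableSpace Ω] {P : Measure Ω} {X : Ω → ℝ}

lemma measureReal_preimage_combTooth (hXm : Measurable X)
    (hlaw : P.map X = volume.withDensity (fun x => ENNReal.ofReal (combDensity a b N w x)))
    (hN : N ≠ 0) (hw : 0 < w) (hk : k ∈ Finset.Icc 1 N) :
    P.real (X ⁻¹' combTooth a b N w k) = 1 / N := by
  rw [combTooth, measureReal_preimage_Ioc_eq hXm hlaw (by linarith) (by positivity)
    (combDensity_eqOn_combTooth hk)]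
  field_simp
  ring

lemma setIntegral_preimage_combTooth (hXm : Measurable X)
    (hlaw : P.map X = volume.withDensity (fun x => ENNReal.ofReal (combDensity a b N w x)))
    (hN : N ≠ 0) (hw : 0 < w) (hk : k ∈ Finset.Icc 1 N) :
    ∫ ω in X ⁻¹' combTooth a b N w k, X ω ∂P = 1 / N * (combPoint a b N k - w / 2) := by
  rw [combTooth, setIntegral_preimage_Ioc_eq hXm hlaw (by linarith) (by positivity)
    (combDensity_eqOn_combTooth hk)]
  field_simp
  ring

lemma measure_preimage_pos_of_combTooth_subset (hXm : Measurable X)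
    (hlaw : P.map X = volume.withDensity (fun x => ENNReal.ofReal (combDensity a b N w x)))
    (hN : N ≠ 0) (hw : 0 < w) (hk : k ∈ Finset.Icc 1 N) {u v : ℝ}
    (hku : combTooth a b N w k ⊆ Ioc u v) : 0 < P {ω | X ω ∈ Ioc u v} := by
  have h := measureReal_preimage_combTooth hXm hlaw hN hw hk
  have hpos : 0 < P.real (X ⁻¹' combTooth a b N w k) := by rw [h]; positivity
  exact (ENNReal.toReal_pos_iff.1 hpos).1.trans_le (measure_mono (preimage_mono hku))

lemma div_two_mul_sq_le_Delta_of_combTooth_subset [IsFiniteMeasure P] (hX : Integrable X P)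
    (hXm : Measurable X)
    (hlaw : P.map X = volume.withDensity (fun x => ENNReal.ofReal (combDensity a b N w x)))
    (hN : N ≠ 0) (hw : 0 < w) (hwN : w < (b - a) / N)
    (hk : k ∈ Finset.Icc 1 N) (hl : l ∈ Finset.Icc 1 N) (hkl : k ≠ l) {u v : ℝ}
    (hku : combTooth a b N w k ⊆ Ioc u v) (hlu : combTooth a b N w l ⊆ Ioc u v) :
    (b - a) / (2 * N ^ 2) ≤ Delta P X u v := by
  have h := half_mul_abs_sub_le_Delta hX hXm (hXm measurableSet_Ioc)
    ((disjoint_combTooth hwN hkl).preimage X) (preimage_mono hku) (preimage_mono hlu)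
    (by positivity) (measureReal_preimage_combTooth hXm hlaw hN hw hk)
    (measureReal_preimage_combTooth hXm hlaw hN hw hl)
    (setIntegral_preimage_combTooth hXm hlaw hN hw hk)
    (setIntegral_preimage_combTooth hXm hlaw hN hw hl)
  rw [sub_sub_sub_cancel_right] at h
  have hgap := (le_abs_self _).trans (abs_le_abs_combPoint_sub (a := a) (b := b) (N := N) hkl)
  calc (b - a) / (2 * N ^ 2) = 1 / N * ((b - a) / N) / 2 := by field_simp
    _ ≤ 1 / N * |combPoint a b N k - combPoint a b N l| / 2 := by gcongr
    _ ≤ Delta P X u v := h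

end Comb

section Cells

lemma exists_mem_Ioc_of_lt_of_le {r : ℕ → ℝ} {m : ℕ} {x : ℝ} (h0 : r 0 < x) (hm : x ≤ r m) :
    ∃ j ∈ Finset.Icc 1 m, x ∈ Ioc (r (j - 1)) (r j) := by
  classical
  have hex : ∃ j, x ≤ r j := ⟨m, hm⟩
  have hj0 : Nat.find hex ≠ 0 := fun h => (h ▸ Nat.find_spec hex).not_gt h0
  exact ⟨Nat.find hex, Finset.mem_Icc.2 ⟨Nat.one_le_iff_ne_zero.2 hj0, Nat.find_min' hex hm⟩,
    not_le.1 (Nat.find_min hex (by omega)), Nat.find_spec hex⟩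

lemma card_le_two_mul_sub_one_of_pairwiseDisjoint_Ioc {ι : Type*} {s : Finset ι} {y x : ι → ℝ}
    {r : ℕ → ℝ} {m : ℕ} (hyx : ∀ k ∈ s, y k < x k)
    (hsub : ∀ k ∈ s, Ioc (y k) (x k) ⊆ Ioc (r 0) (r m))
    (hdisj : (s : Set ι).PairwiseDisjoint fun k => Ioc (y k) (x k))
    (hcell : ∀ j ∈ Finset.Icc 1 m, ∀ k ∈ s, ∀ l ∈ s, Ioc (y k) (x k) ⊆ Ioc (r (j - 1)) (r j) →
      Ioc (y l) (x l) ⊆ Ioc (r (j - 1)) (r j) → k = l) :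
    s.card ≤ 2 * m - 1 := by
  classical
  have hidx : ∀ k ∈ s, ∃ j ∈ Finset.Icc 1 m, x k ∈ Ioc (r (j - 1)) (r j) := fun k hk =>
    have h := (Ioc_subset_Ioc_iff (hyx k hk)).1 (hsub k hk)
    exists_mem_Ioc_of_lt_of_le (h.2.trans_lt (hyx k hk)) h.1
  choose! j hj hxj using hidx
  -- An interval lying in the cell `j` of its right end is coded by `2 j - 1`; otherwise the
  -- breakpoint `r (j - 1)` cuts it, and it is coded by `2 (j - 1)`.
  let code : ι → ℕ := fun k => if r (j k - 1) ≤ y k then 2 * j k - 1 else 2 * (j k - 1)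
  have hmaps : ∀ k ∈ s, code k ∈ Finset.Icc 1 (2 * m - 1) := by
    intro k hk
    have hjk := Finset.mem_Icc.1 (hj k hk)
    have hr0 := ((Ioc_subset_Ioc_iff (hyx k hk)).1 (hsub k hk)).2
    simp only [code, Finset.mem_Icc]
    split_ifs with hcut
    · omega
    · have : j k ≠ 1 := fun h => hcut (by rwa [h])
      omega
  have hinj : Set.InjOn code s := by
    intro k hk l hl hkl
    have hjk := Finset.mem_Icc.1 (hj k hk)
    have hjl := Finset.mem_Icc.1 (hj l hl)
    simp only [code] at hkl
    split_ifs at hkl with hk' hl' hl'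
    · have hjkl : j k = j l := by omega
      refine hcell (j k) (hj k hk) k hk l hl (Ioc_subset_Ioc hk' (hxj k hk).2) ?_
      rw [hjkl]
      exact Ioc_subset_Ioc hl' (hxj l hl).2
    · omega
    · omega
    · have hjkl : j k = j l := by omega
      refine hdisj.elim hk hl
        (not_disjoint_iff.2 ⟨r (j k - 1), ⟨not_le.1 hk', (hxj k hk).1.le⟩, ?_⟩)
      rw [hjkl]
      exact ⟨not_le.1 hl', (hxj l hl).1.le⟩
  have hcard := Finset.card_le_card_of_injOn code hmaps hinj
  rw [Nat.card_Icc] at hcard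
  omega

end Cells

theorem lower_bound_continuous_partition_general {Ω : Type*} [MeasurableSpace Ω]
    (P : Measure Ω) [IsProbabilityMeasure P]
    (X : Ω → ℝ) (hX : Integrable X P) (hXm : Measurable X)
    (a b : ℝ)
    (N : ℕ) (hN : 0 < N)
    (ε : ℝ) (hεW : ε < (b - a) / (2 * (N : ℝ) ^ 2))
    (w : ℝ) (hw : 0 < w) (hwN : w < (b - a) / N)
    (hlaw : P.map X =
      volume.withDensity (fun x => ENNReal.ofReal (combDensity a b N w x)))
    (m : ℕ)
    (r : ℕ → ℝ) (hr0 : r 0 = a) (hrm : r m = b)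
    (hrerr : ∀ j, 1 ≤ j → j ≤ m →
      0 < P {ω | X ω ∈ Set.Ioc (r (j - 1)) (r j)} →
      Delta P X (r (j - 1)) (r j) ≤ ε) :
    (N : ℝ) / 2 < (m : ℝ) := by
  have hN0 : N ≠ 0 := hN.ne'
  have hcard : (Finset.Icc 1 N).card ≤ 2 * m - 1 := by
    refine card_le_two_mul_sub_one_of_pairwiseDisjoint_Ioc (y := fun k => combPoint a b N k - w)
      (x := combPoint a b N) (r := r) (fun _ _ => by linarith)
      (fun k hk => by rw [hr0, hrm]; exact combTooth_subset_Ioc hN0 hw.le hwN.le hk)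
      (fun _ _ _ _ hkl => disjoint_combTooth hwN hkl) ?_
    intro j hj k hk l hl hkj hlj
    by_contra hkl
    have hΔ := hrerr j (Finset.mem_Icc.1 hj).1 (Finset.mem_Icc.1 hj).2
      (measure_preimage_pos_of_combTooth_subset hXm hlaw hN0 hw hk hkj)
    linarith [div_two_mul_sq_le_Delta_of_combTooth_subset hX hXm hlaw hN0 hw hwN hk hl hkl
      hkj hlj]
  rw [Nat.card_Icc, Nat.add_sub_cancel] at hcard
  have hNm : (N : ℝ) < 2 * m := by exact_mod_cast (by omega : N < 2 * m)
  linarith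

/-- Let `N ≥ 1`, `0 < ε < W/(2N²)` with `W = b − a`, `0 < w < W/N`,
and let `X` be the continuous random variable whose law has density `combDensity a b N w`
with respect to Lebesgue measure. Then every partition `(I_1,…,I_m)` of `(a, b]` into
consecutive half-open intervals `I_j = (r (j−1), r j]` with `Δ_X(I_j) ≤ ε` for every `j`
with `P(X ∈ I_j) > 0` must satisfy `m > N/2`. -/
theorem lower_bound_continuous_partition {Ω : Type*} [MeasurableSpace Ω]
    (P : Measure Ω) [IsProbabilityMeasure P]
    (X : Ω → ℝ) (hX : Integrable X P) (hXm : Measurable X)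
    (a b : ℝ) (hab : a < b)
    (N : ℕ) (hN : 0 < N)
    (ε : ℝ) (hε : 0 < ε) (hεW : ε < (b - a) / (2 * (N : ℝ) ^ 2))
    (w : ℝ) (hw : 0 < w) (hwN : w < (b - a) / N)
    (hlaw : P.map X =
      volume.withDensity (fun x => ENNReal.ofReal (combDensity a b N w x)))
    (m : ℕ) (hm : 1 ≤ m)
    (r : ℕ → ℝ) (hr0 : r 0 = a) (hrm : r m = b)
    (hrmono : ∀ i < m, r i < r (i + 1))
    (hrerr : ∀ j, 1 ≤ j → j ≤ m →
      0 < P {ω | X ω ∈ Set.Ioc (r (j - 1)) (r j)} →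
      Delta P X (r (j - 1)) (r j) ≤ ε) :
    (N : ℝ) / 2 < (m : ℝ) :=
  lower_bound_continuous_partition_general P X hX hXm a b N hN ε hεW w hw hwN hlaw m r hr0 hrm hrerr
end
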